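/- arXiv:2412.00985 — 4 statements merged into one kernel-verified Lean document; each statement's English description precedes it below -/
import Mathlib

section
/- Let $\mathcal{P}$ be a finite-horizon POMDP with horizon $H$, rewards $r_h(s,a) \in [0,1]$, satisfying the deterministic filter condition (so that the true decoding functions $\psi_h$ exist). Let $\pi^E$ be any state-based policy and let $\{g_h\}_{h \in [H]}$ be decoding functions such that the probability, under the trajectory distribution induced by running $\pi^E$ through the true decoder on $\mathcal{P}$, that there exists some $h \in [H]$ with $g_h(s_{h-1}, a_{h-1}, o_h) \neq s_h$, is at most $\epsilon$. Let $\pi$ be the composed policy that at each step decodes the state via $g_h$ (applied recursively along the history) and then acts via $\pi^E$ on the decoded state. Then $v^{\mathcal{P}}(\pi) \geq v^{\mathcal{P}}(\tilde{\pi}^E) - H\epsilon$, where $\tilde{\pi}^E$ is the policy that uses the true decoding functions $\psi_h$ composed with $\pi^E$, and $v^{\mathcal{P}}$ denotes expected cumulative reward over an episode. -/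
open Finset

section POMDP

variable {St Ob Ac : Type*}

/-- Extend a `Fin H`-indexed sequence to `ℕ` by a default value. -/
def extN {α : Type*} [Inhabited α] {H : ℕ} (f : Fin H → α) : ℕ → α :=
  fun k => if hk : k < H then f ⟨k, hk⟩ else default

/-- A general history-and-state-dependent (randomized) policy: at each step it
assigns a probability to each action, given the full trajectory so far. -/
abbrev GPolicy (St Ob Ac : Type*) := ℕ → (ℕ → St) → (ℕ → Ob) → (ℕ → Ac) → Ac → ℝ

/-- A policy is causal if its choice at step `h` depends only on states and
observations up to step `h` and actions before step `h`. -/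
def CausalPolicy (H : ℕ) (π : GPolicy St Ob Ac) : Prop :=
  ∀ h, h < H → ∀ (s s' : ℕ → St) (o o' : ℕ → Ob) (a a' : ℕ → Ac),
    (∀ k, k ≤ h → s k = s' k) → (∀ k, k ≤ h → o k = o' k) → (∀ k, k < h → a k = a' k) →
    π h s o a = π h s' o' a'

/-- A valid general policy: causal, and a probability distribution over actions
at every step. -/
def IsPolicy [Fintype Ac] (H : ℕ) (π : GPolicy St Ob Ac) : Prop :=
  CausalPolicy H π ∧ ∀ h s o a, (∀ b, 0 ≤ π h s o a b) ∧ ∑ b, π h s o a b = 1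

/-- Probability of a (ℕ-indexed) trajectory `(s, o, a)` of a finite-horizon POMDP
`(μ, T, Obs)` of horizon `H` under policy `π`. -/
noncomputable def trajProbN (H : ℕ) (μ : St → ℝ) (T : ℕ → St → Ac → St → ℝ)
    (Obs : ℕ → St → Ob → ℝ) (π : GPolicy St Ob Ac)
    (s : ℕ → St) (o : ℕ → Ob) (a : ℕ → Ac) : ℝ :=
  μ (s 0) * ∏ h ∈ Finset.range H,
    (Obs h (s h) (o h) * π h s o a (a h) *
      (if h + 1 < H then T h (s h) (a h) (s (h + 1)) else 1))

/-- Model-probability of a trajectory (with the policy factors removed): positive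
exactly on trajectories reachable under some general policy. -/
noncomputable def modelProbN (H : ℕ) (μ : St → ℝ) (T : ℕ → St → Ac → St → ℝ)
    (Obs : ℕ → St → Ob → ℝ) (s : ℕ → St) (o : ℕ → Ob) (a : ℕ → Ac) : ℝ :=
  μ (s 0) * ∏ h ∈ Finset.range H,
    (Obs h (s h) (o h) * (if h + 1 < H then T h (s h) (a h) (s (h + 1)) else 1))

/-- A full trajectory `(s_{1:H}, o_{1:H}, a_{1:H})` of a horizon-`H` POMDP. -/
abbrev Traj (H : ℕ) (St Ob Ac : Type*) := (Fin H → St) × (Fin H → Ob) × (Fin H → Ac)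

/-- Probability of a full trajectory. -/
noncomputable def trajProb [Inhabited St] [Inhabited Ob] [Inhabited Ac]
    (H : ℕ) (μ : St → ℝ) (T : ℕ → St → Ac → St → ℝ) (Obs : ℕ → St → Ob → ℝ)
    (π : GPolicy St Ob Ac) (t : Traj H St Ob Ac) : ℝ :=
  trajProbN H μ T Obs π (extN t.1) (extN t.2.1) (extN t.2.2)

/-- Expected cumulative reward (value) of a policy `π`. -/
noncomputable def pvalue [Fintype St] [Fintype Ob] [Fintype Ac]
    [Inhabited St] [Inhabited Ob] [Inhabited Ac]
    (H : ℕ) (μ : St → ℝ) (T : ℕ → St → Ac → St → ℝ) (Obs : ℕ → St → Ob → ℝ)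
    (r : ℕ → St → Ac → ℝ) (π : GPolicy St Ob Ac) : ℝ :=
  ∑ t : Traj H St Ob Ac,
    trajProb H μ T Obs π t * ∑ h ∈ Finset.range H, r h (extN t.1 h) (extN t.2.2 h)

end POMDP

section Distill

open Classical

variable {St Ob Ac : Type*}

/-- Recursively decoded state at each step, obtained by applying the decoding
functions `g` along the observation-action history (with dummy initial state
`s0` and dummy initial action `a0`). -/
def decSt (g : ℕ → St → Ac → Ob → St) (s0 : St) (a0 : Ac)
    (o : ℕ → Ob) (a : ℕ → Ac) : ℕ → St
  | 0 => g 0 s0 a0 (o 0)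
  | k + 1 => g (k + 1) (decSt g s0 a0 o a k) (a k) (o (k + 1))

/-- The distilled (history-based) policy: decode the state recursively via `g`,
then act with the state-based expert policy `πE`. -/
noncomputable def distill (πE : ℕ → St → Ac → ℝ) (g : ℕ → St → Ac → Ob → St)
    (s0 : St) (a0 : Ac) : GPolicy St Ob Ac :=
  fun h _s o a b => πE h (decSt g s0 a0 o a h) b

/-!
On a trajectory along which `g` decodes every state correctly, the filter condition
(on reachable trajectories) makes `ψ` decode correctly too, so both recursive decoders
return the true states and the two composed policies give the trajectory the same
probability. The remaining trajectories have probability at most `ε` under `πE ∘ ψ` and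
reward at most `H`, so they cost at most `H ε` in value.
-/

def DecodesAlong (H : ℕ) (d : ℕ → St → Ac → Ob → St) (s0 : St) (a0 : Ac)
    (s : ℕ → St) (o : ℕ → Ob) (a : ℕ → Ac) : Prop :=
  ∀ h, h < H →
    d h (if h = 0 then s0 else s (h - 1)) (if h = 0 then a0 else a (h - 1)) (o h) = s h

theorem DecodesAlong.decSt_eq {H : ℕ} {d : ℕ → St → Ac → Ob → St} {s0 : St} {a0 : Ac}
    {s : ℕ → St} {o : ℕ → Ob} {a : ℕ → Ac} (hd : DecodesAlong H d s0 a0 s o a) :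
    ∀ h, h < H → decSt d s0 a0 o a h = s h := by
  intro h
  induction h with
  | zero => exact hd 0
  | succ k ih =>
    intro hk
    simpa [decSt, ih (Nat.lt_of_succ_lt hk)] using hd (k + 1) hk

theorem trajProbN_eq_zero_of_modelProbN_eq_zero {H : ℕ} {μ : St → ℝ}
    {T : ℕ → St → Ac → St → ℝ} {Obs : ℕ → St → Ob → ℝ} (π : GPolicy St Ob Ac)
    {s : ℕ → St} {o : ℕ → Ob} {a : ℕ → Ac} (h0 : modelProbN H μ T Obs s o a = 0) :
    trajProbN H μ T Obs π s o a = 0 := by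
  rcases mul_eq_zero.mp h0 with hμ | hprod
  · simp [trajProbN, hμ]
  · obtain ⟨k, hk, hfactor⟩ := prod_eq_zero_iff.mp hprod
    refine mul_eq_zero_of_right _ (prod_eq_zero hk ?_)
    rcases mul_eq_zero.mp hfactor with hO | hT
    · simp [hO]
    · exact mul_eq_zero_of_right _ hT

theorem trajProbN_nonneg {H : ℕ} {μ : St → ℝ} {T : ℕ → St → Ac → St → ℝ}
    {Obs : ℕ → St → Ob → ℝ} {π : GPolicy St Ob Ac} (hμ0 : ∀ x, 0 ≤ μ x)
    (hT0 : ∀ h x u y, 0 ≤ T h x u y) (hO0 : ∀ h x o, 0 ≤ Obs h x o)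
    (hπ0 : ∀ h s o a b, 0 ≤ π h s o a b) (s : ℕ → St) (o : ℕ → Ob) (a : ℕ → Ac) :
    0 ≤ trajProbN H μ T Obs π s o a := by
  refine mul_nonneg (hμ0 _) (prod_nonneg fun h _ => ?_)
  refine mul_nonneg (mul_nonneg (hO0 _ _ _) (hπ0 _ _ _ _ _)) ?_
  split_ifs
  · exact hT0 _ _ _ _
  · exact zero_le_one

theorem trajProbN_distill_eq {H : ℕ} {μ : St → ℝ} {T : ℕ → St → Ac → St → ℝ}
    {Obs : ℕ → St → Ob → ℝ} (πE : ℕ → St → Ac → ℝ) {ψ g : ℕ → St → Ac → Ob → St}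
    {s0 : St} {a0 : Ac} {s : ℕ → St} {o : ℕ → Ob} {a : ℕ → Ac}
    (hψ : modelProbN H μ T Obs s o a ≠ 0 → DecodesAlong H ψ s0 a0 s o a)
    (hg : DecodesAlong H g s0 a0 s o a) :
    trajProbN H μ T Obs (distill πE g s0 a0) s o a =
      trajProbN H μ T Obs (distill πE ψ s0 a0) s o a := by
  by_cases hm : modelProbN H μ T Obs s o a = 0
  · rw [trajProbN_eq_zero_of_modelProbN_eq_zero _ hm,
      trajProbN_eq_zero_of_modelProbN_eq_zero _ hm]
  refine congrArg _ (prod_congr rfl fun h hh => ?_)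
  have hh : h < H := mem_range.mp hh
  simp only [distill, hg.decSt_eq h hh, (hψ hm).decSt_eq h hh]

theorem Finset.sum_mul_sub_le_sum_mul_of_eq_off {ι : Type*} (S : Finset ι) (p : ι → Prop)
    [DecidablePred p] {P Q R : ι → ℝ} {C ε : ℝ} (hC : 0 ≤ C)
    (hP : ∀ i ∈ S, 0 ≤ P i) (hQ : ∀ i ∈ S, 0 ≤ Q i)
    (hR0 : ∀ i ∈ S, 0 ≤ R i) (hRC : ∀ i ∈ S, R i ≤ C)
    (hQP : ∀ i ∈ S, ¬ p i → Q i = P i) (hmass : ∑ i ∈ S with p i, P i ≤ ε) :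
    ∑ i ∈ S, P i * R i - C * ε ≤ ∑ i ∈ S, Q i * R i := by
  have hbad : ∑ i ∈ S with p i, P i * R i ≤ C * ε :=
    calc ∑ i ∈ S with p i, P i * R i
        ≤ ∑ i ∈ S with p i, P i * C := sum_le_sum fun i hi =>
          have hi := (mem_filter.mp hi).1
          mul_le_mul_of_nonneg_left (hRC i hi) (hP i hi)
      _ = C * ∑ i ∈ S with p i, P i := by rw [mul_sum]; simp_rw [mul_comm]
      _ ≤ C * ε := mul_le_mul_of_nonneg_left hmass hC
  have hgood : ∑ i ∈ S with ¬ p i, P i * R i ≤ ∑ i ∈ S, Q i * R i :=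
    calc ∑ i ∈ S with ¬ p i, P i * R i
        = ∑ i ∈ S with ¬ p i, Q i * R i := sum_congr rfl fun i hi => by
          obtain ⟨hi, hpi⟩ := mem_filter.mp hi
          rw [hQP i hi hpi]
      _ ≤ ∑ i ∈ S, Q i * R i := sum_le_sum_of_subset_of_nonneg
          (filter_subset _ _) fun i hi _ => mul_nonneg (hQ i hi) (hR0 i hi)
  rw [← sum_filter_add_sum_filter_not S p]
  linarith

theorem stmt_5_general [Fintype St] [Fintype Ob] [Fintype Ac]
    [Inhabited St] [Inhabited Ob] [Inhabited Ac]
    (H : ℕ)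
    (μ : St → ℝ) (T : ℕ → St → Ac → St → ℝ) (Obs : ℕ → St → Ob → ℝ)
    (hμ0 : ∀ x, 0 ≤ μ x)
    (hT0 : ∀ h x u y, 0 ≤ T h x u y)
    (hO0 : ∀ h x o, 0 ≤ Obs h x o)
    (r : ℕ → St → Ac → ℝ) (hr0 : ∀ h x u, 0 ≤ r h x u) (hr1 : ∀ h x u, r h x u ≤ 1)
    (s0 : St) (a0 : Ac)
    (ψ : ℕ → St → Ac → Ob → St)
    -- deterministic filter condition: `ψ` correctly decodes the state one step at
    -- a time along every reachable trajectory
    (hψ : ∀ (s : ℕ → St) (o : ℕ → Ob) (a : ℕ → Ac),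
      modelProbN H μ T Obs s o a ≠ 0 → ∀ h, h < H →
        ψ h (if h = 0 then s0 else s (h - 1)) (if h = 0 then a0 else a (h - 1)) (o h) = s h)
    (πE : ℕ → St → Ac → ℝ)
    (hπE0 : ∀ h x b, 0 ≤ πE h x b)
    (g : ℕ → St → Ac → Ob → St) (ε : ℝ)
    -- the probability, under `π̃E = πE ∘ ψ`, that `g` decodes incorrectly somewhere
    (hg : ∑ t ∈ Finset.univ.filter (fun t : Traj H St Ob Ac =>
          ∃ h, h < H ∧
            g h (if h = 0 then s0 else extN t.1 (h - 1))
              (if h = 0 then a0 else extN t.2.2 (h - 1)) (extN t.2.1 h) ≠ extN t.1 h),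
        trajProb H μ T Obs (distill πE ψ s0 a0) t ≤ ε) :
    pvalue H μ T Obs r (distill πE g s0 a0) ≥
      pvalue H μ T Obs r (distill πE ψ s0 a0) - H * ε := by
  have hprob0 : ∀ d t, 0 ≤ trajProb H μ T Obs (distill πE d s0 a0) t := fun _ _ =>
    trajProbN_nonneg hμ0 hT0 hO0 (fun h _ _ _ b => hπE0 h _ b) _ _ _
  have hreward_le : ∀ t : Traj H St Ob Ac,
      ∑ h ∈ range H, r h (extN t.1 h) (extN t.2.2 h) ≤ H :=
    fun _ => (sum_le_sum fun h _ => hr1 h _ _).trans_eq (by simp)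
  refine ge_iff_le.mpr (sum_mul_sub_le_sum_mul_of_eq_off univ _ (Nat.cast_nonneg H)
    (fun t _ => hprob0 ψ t) (fun t _ => hprob0 g t)
    (fun _ _ => sum_nonneg fun h _ => hr0 h _ _) (fun t _ => hreward_le t)
    (fun _ _ hgood => trajProbN_distill_eq πE (hψ _ _ _)
      fun h hh => not_not.mp fun hne => hgood ⟨h, hh, hne⟩) hg)

/-- Performance of the distilled policy: in a POMDP satisfying the
deterministic filter condition (with true decoders `ψ`), if the decoding functions
`g` are wrong somewhere along the trajectory with probability at most `ε` under the
policy `π̃E` (the expert `πE` composed with the true decoder `ψ`), then the value of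
the distilled policy `πE ∘ g` is at least the value of `π̃E` minus `H ε`. -/
theorem stmt_5 [Fintype St] [Fintype Ob] [Fintype Ac]
    [Inhabited St] [Inhabited Ob] [Inhabited Ac]
    (H : ℕ) (hH : 0 < H)
    (μ : St → ℝ) (T : ℕ → St → Ac → St → ℝ) (Obs : ℕ → St → Ob → ℝ)
    (hμ0 : ∀ x, 0 ≤ μ x) (hμs : ∑ x, μ x = 1)
    (hT0 : ∀ h x u y, 0 ≤ T h x u y) (hTs : ∀ h x u, ∑ y, T h x u y = 1)
    (hO0 : ∀ h x o, 0 ≤ Obs h x o) (hOs : ∀ h x, ∑ o, Obs h x o = 1)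
    (r : ℕ → St → Ac → ℝ) (hr0 : ∀ h x u, 0 ≤ r h x u) (hr1 : ∀ h x u, r h x u ≤ 1)
    (s0 : St) (a0 : Ac)
    (ψ : ℕ → St → Ac → Ob → St)
    -- deterministic filter condition: `ψ` correctly decodes the state one step at
    -- a time along every reachable trajectory
    (hψ : ∀ (s : ℕ → St) (o : ℕ → Ob) (a : ℕ → Ac),
      modelProbN H μ T Obs s o a ≠ 0 → ∀ h, h < H →
        ψ h (if h = 0 then s0 else s (h - 1)) (if h = 0 then a0 else a (h - 1)) (o h) = s h)
    (πE : ℕ → St → Ac → ℝ)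
    (hπE0 : ∀ h x b, 0 ≤ πE h x b) (hπEs : ∀ h x, ∑ b, πE h x b = 1)
    (g : ℕ → St → Ac → Ob → St) (ε : ℝ)
    -- the probability, under `π̃E = πE ∘ ψ`, that `g` decodes incorrectly somewhere
    (hg : ∑ t ∈ Finset.univ.filter (fun t : Traj H St Ob Ac =>
          ∃ h, h < H ∧
            g h (if h = 0 then s0 else extN t.1 (h - 1))
              (if h = 0 then a0 else extN t.2.2 (h - 1)) (extN t.2.1 h) ≠ extN t.1 h),
        trajProb H μ T Obs (distill πE ψ s0 a0) t ≤ ε) :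
    pvalue H μ T Obs r (distill πE g s0 a0) ≥
      pvalue H μ T Obs r (distill πE ψ s0 a0) - H * ε :=
  stmt_5_general H μ T Obs hμ0 hT0 hO0 r hr0 hr1 s0 a0 ψ hψ πE hπE0 g ε hg

end Distill
end

section
/- In a finite-horizon POMDP, the deterministic filter condition (existence of functions $\psi_h : \mathcal{S} \times \mathcal{A} \times \mathcal{O} \to \mathcal{S}$ such that for every reachable $(s_{h-1}, a_{h-1}, o_h)$ the Bayesian belief update of a point-mass belief at $s_{h-1}$ is a point mass at $\psi_h(s_{h-1}, a_{h-1}, o_h)$, and similarly $\psi_1$ for the first step) is equivalent to the history-decodability condition: for each $h \in [H]$ there exists a function $\phi_h : \mathcal{T}_h \to \mathcal{S}$ on observation-action histories such that $\mathbb{P}^{\mathcal{P}}(s_h = \phi_h(\tau_h) \mid \tau_h) = 1$ for every reachable history $\tau_h$. -/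
/-!
A trajectory has positive probability iff each of its factors (initial weight, emission
probabilities, transition probabilities) is nonzero, and since the kernels are stochastic any
such prefix extends to a full reachable trajectory. Given decoders `ψ`, the state is recovered
from the history by running the filter `φ_k = ψ_k(φ_{k-1}, a_{k-1}, o_k)`: a point-mass
posterior leaves no room for any other state of positive posterior weight. Conversely, given
a history decoder `φ`, every state `y` of positive posterior weight after the update from
`s_{k-1}` can be spliced into a reachable trajectory with the same history, so `y = φ_k(τ_k)`
is forced, and the posterior is the point mass at the true state.
-/

open Finset

section Filter

variable {St Ob Ac : Type*}

/-- The Bayes operator `B_h(b; o)`: condition the belief `b` on observing `o` at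
step `h`. -/
noncomputable def bayesOp [Fintype St] (Obs : ℕ → St → Ob → ℝ) (h : ℕ)
    (b : St → ℝ) (o : Ob) : St → ℝ :=
  fun x => Obs h x o * b x / ∑ z, Obs h z o * b z

/-- The belief update operator `U_h(b; a, o)`: push the belief `b` (over the state
at step `h - 1`) through the transition under action `a` and condition on the
observation `o` at step `h`. -/
noncomputable def beliefUpdate [Fintype St] (T : ℕ → St → Ac → St → ℝ)
    (Obs : ℕ → St → Ob → ℝ) (h : ℕ) (b : St → ℝ) (a : Ac) (o : Ob) : St → ℝ :=
  bayesOp Obs h (fun x => ∑ z, b z * T (h - 1) z a x) o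

/-- Point-mass (one-hot) belief at a state. -/
def pointMass [DecidableEq St] (s : St) : St → ℝ := fun x => if x = s then 1 else 0

def IsReachable (H : ℕ) (μ : St → ℝ) (T : ℕ → St → Ac → St → ℝ) (Obs : ℕ → St → Ob → ℝ)
    (s : ℕ → St) (o : ℕ → Ob) (a : ℕ → Ac) : Prop :=
  μ (s 0) ≠ 0 ∧ (∀ j < H, Obs j (s j) (o j) ≠ 0) ∧
    ∀ j, j + 1 < H → T j (s j) (a j) (s (j + 1)) ≠ 0

section Reachable

variable {H : ℕ} {μ : St → ℝ} {T : ℕ → St → Ac → St → ℝ} {Obs : ℕ → St → Ob → ℝ}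
  {s : ℕ → St} {o : ℕ → Ob} {a : ℕ → Ac}

theorem modelProbN_ne_zero_iff :
    modelProbN H μ T Obs s o a ≠ 0 ↔ IsReachable H μ T Obs s o a := by
  simp only [modelProbN, IsReachable, ne_eq, mul_eq_zero, not_or, Finset.prod_eq_zero_iff,
    Finset.mem_range, not_exists, not_and]
  constructor
  · rintro ⟨hμ, hfac⟩
    refine ⟨hμ, fun j hj => (hfac j hj).1, fun j hj => ?_⟩
    simpa [hj] using (hfac j (by omega)).2
  · rintro ⟨hμ, hO, hT⟩
    refine ⟨hμ, fun j hj => ⟨hO j hj, ?_⟩⟩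
    split_ifs with hj'
    · exact hT j hj'
    · exact one_ne_zero

theorem IsReachable.mono {m : ℕ} (h : IsReachable H μ T Obs s o a) (hm : m ≤ H) :
    IsReachable m μ T Obs s o a :=
  ⟨h.1, fun j hj => h.2.1 j (by omega), fun j hj => h.2.2 j (by omega)⟩

theorem isReachable_one (h : Obs 0 (s 0) (o 0) * μ (s 0) ≠ 0) :
    IsReachable 1 μ T Obs s o a := by
  obtain ⟨hO, hμ⟩ := mul_ne_zero_iff.mp h
  refine ⟨hμ, fun j hj => ?_, fun j hj => by omega⟩
  obtain rfl : j = 0 := by omega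
  exact hO

theorem isReachable_add_two_iff {n : ℕ} :
    IsReachable (n + 2) μ T Obs s o a ↔ IsReachable (n + 1) μ T Obs s o a ∧
      Obs (n + 1) (s (n + 1)) (o (n + 1)) * T n (s n) (a n) (s (n + 1)) ≠ 0 := by
  constructor
  · intro h
    exact ⟨h.mono (by omega), mul_ne_zero (h.2.1 (n + 1) (by omega)) (h.2.2 n (by omega))⟩
  · rintro ⟨⟨hμ, hO, hT⟩, hlast⟩
    obtain ⟨hOlast, hTlast⟩ := mul_ne_zero_iff.mp hlast
    refine ⟨hμ, fun j hj => ?_, fun j hj => ?_⟩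
    · rcases (by omega : j = n + 1 ∨ j < n + 1) with rfl | hj
      exacts [hOlast, hO j hj]
    · rcases (by omega : j = n ∨ j + 1 < n + 1) with rfl | hj
      exacts [hTlast, hT j hj]

theorem IsReachable.congr {n : ℕ} {s' : ℕ → St} {o' : ℕ → Ob}
    (h : IsReachable (n + 1) μ T Obs s o a) (hagree : ∀ j ≤ n, s' j = s j ∧ o' j = o j) :
    IsReachable (n + 1) μ T Obs s' o' a := by
  obtain ⟨hμ, hO, hT⟩ := h
  refine ⟨?_, fun j hj => ?_, fun j hj => ?_⟩
  · rwa [(hagree 0 (Nat.zero_le n)).1]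
  · rw [(hagree j (by omega)).1, (hagree j (by omega)).2]
    exact hO j hj
  · rw [(hagree j (by omega)).1, (hagree (j + 1) (by omega)).1]
    exact hT j hj

theorem IsReachable.update_succ {n : ℕ} (h : IsReachable (n + 2) μ T Obs s o a) {y : St}
    (hy : Obs (n + 1) y (o (n + 1)) * T n (s n) (a n) y ≠ 0) :
    IsReachable (n + 2) μ T Obs (Function.update s (n + 1) y) o a := by
  rw [isReachable_add_two_iff] at h ⊢
  refine ⟨h.1.congr fun j hj => ⟨Function.update_of_ne (by omega) _ _, rfl⟩, ?_⟩
  simpa [Function.update_of_ne (by omega : n ≠ n + 1)] using hy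

theorem IsReachable.exists_extend_succ (hT : ∀ h x u, ∃ y, T h x u y ≠ 0)
    (hO : ∀ h x, ∃ ob, Obs h x ob ≠ 0) {n : ℕ} (h : IsReachable (n + 1) μ T Obs s o a) :
    ∃ (s' : ℕ → St) (o' : ℕ → Ob), (∀ j ≤ n, s' j = s j ∧ o' j = o j) ∧
      IsReachable (n + 2) μ T Obs s' o' a := by
  obtain ⟨y, hy⟩ := hT n (s n) (a n)
  obtain ⟨ob, hob⟩ := hO (n + 1) y
  have hagree : ∀ j ≤ n, Function.update s (n + 1) y j = s j ∧
      Function.update o (n + 1) ob j = o j := fun j hj =>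
    ⟨Function.update_of_ne (by omega) _ _, Function.update_of_ne (by omega) _ _⟩
  refine ⟨_, _, hagree, isReachable_add_two_iff.mpr ⟨h.congr hagree, ?_⟩⟩
  simpa [Function.update_of_ne (by omega : n ≠ n + 1)] using mul_ne_zero hob hy

theorem IsReachable.exists_extend (hT : ∀ h x u, ∃ y, T h x u y ≠ 0)
    (hO : ∀ h x, ∃ ob, Obs h x ob ≠ 0) {n : ℕ} (h : IsReachable (n + 1) μ T Obs s o a)
    (hnH : n + 1 ≤ H) :
    ∃ (s' : ℕ → St) (o' : ℕ → Ob), (∀ j ≤ n, s' j = s j ∧ o' j = o j) ∧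
      IsReachable H μ T Obs s' o' a := by
  induction H, hnH using Nat.le_induction with
  | base => exact ⟨s, o, fun _ _ => ⟨rfl, rfl⟩, h⟩
  | succ m hm ih =>
    obtain ⟨k, rfl⟩ : ∃ k, m = k + 1 := ⟨m - 1, by omega⟩
    obtain ⟨s₁, o₁, hagree₁, h₁⟩ := ih
    obtain ⟨s₂, o₂, hagree₂, h₂⟩ := h₁.exists_extend_succ hT hO
    refine ⟨s₂, o₂, fun j hj => ?_, h₂⟩
    rw [(hagree₂ j (by omega)).1, (hagree₂ j (by omega)).2]
    exact hagree₁ j hj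

end Reachable

theorem bayesOp_eq_pointMass_iff [Fintype St] [DecidableEq St] {Obs : ℕ → St → Ob → ℝ}
    {h : ℕ} {b : St → ℝ} {o : Ob} {c : St} :
    bayesOp Obs h b o = pointMass c ↔
      Obs h c o * b c ≠ 0 ∧ ∀ y, Obs h y o * b y ≠ 0 → y = c := by
  constructor
  · intro hb
    have hc : Obs h c o * b c / ∑ z, Obs h z o * b z = 1 := by
      simpa [bayesOp, pointMass] using congrFun hb c
    have hD : ∑ z, Obs h z o * b z ≠ 0 := fun hD => by simp [hD] at hc
    refine ⟨fun h0 => by simp [h0] at hc, fun y hy => ?_⟩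
    have := congrFun hb y
    simp only [bayesOp, pointMass] at this
    by_contra hyc
    simp [hyc, hy, hD] at this
  · rintro ⟨hc, huniq⟩
    have hD : ∑ z, Obs h z o * b z = Obs h c o * b c :=
      Finset.sum_eq_single c (fun y _ hyc => not_not.mp (mt (huniq y) hyc))
        (fun hc' => absurd (Finset.mem_univ c) hc')
    funext y
    simp only [bayesOp, hD, pointMass]
    split_ifs with hyc
    · rw [hyc, div_self hc]
    · rw [not_not.mp (mt (huniq y) hyc), zero_div]

theorem beliefUpdate_pointMass [Fintype St] [DecidableEq St]
    (T : ℕ → St → Ac → St → ℝ) (Obs : ℕ → St → Ob → ℝ) (h : ℕ) (x : St) (u : Ac) (o : Ob) :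
    beliefUpdate T Obs h (pointMass x) u o = bayesOp Obs h (T (h - 1) x u) o := by
  simp [beliefUpdate, pointMass, ite_mul]

def histDecoder (ψ0 : Ob → St) (ψ : ℕ → St → Ac → Ob → St) (o : ℕ → Ob) (a : ℕ → Ac) :
    ℕ → St
  | 0 => ψ0 (o 0)
  | k + 1 => ψ (k + 1) (histDecoder ψ0 ψ o a k) (a k) (o (k + 1))

theorem histDecoder_congr (ψ0 : Ob → St) (ψ : ℕ → St → Ac → Ob → St) {o o' : ℕ → Ob}
    {a a' : ℕ → Ac} {k : ℕ} (ho : ∀ j ≤ k, o j = o' j) (ha : ∀ j < k, a j = a' j) :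
    histDecoder ψ0 ψ o a k = histDecoder ψ0 ψ o' a' k := by
  induction k with
  | zero => simp [histDecoder, ho 0 le_rfl]
  | succ k ih =>
    rw [histDecoder, histDecoder, ih (fun j hj => ho j (by omega)) (fun j hj => ha j (by omega)),
      ho (k + 1) le_rfl, ha k (by omega)]

section Decodability

variable {H : ℕ} {μ : St → ℝ} {T : ℕ → St → Ac → St → ℝ} {Obs : ℕ → St → Ob → ℝ}
  {φ : ℕ → (ℕ → Ob) → (ℕ → Ac) → St} {s : ℕ → St} {o : ℕ → Ob} {a : ℕ → Ac}

def IsDeterministicFilter [Fintype St] [DecidableEq St] (H : ℕ) (μ : St → ℝ)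
    (T : ℕ → St → Ac → St → ℝ) (Obs : ℕ → St → Ob → ℝ) (ψ0 : Ob → St)
    (ψ : ℕ → St → Ac → Ob → St) : Prop :=
  (∀ o1 : Ob,
      (∃ (s : ℕ → St) (o : ℕ → Ob) (a : ℕ → Ac),
          modelProbN H μ T Obs s o a ≠ 0 ∧ o 0 = o1) →
      bayesOp Obs 0 μ o1 = pointMass (ψ0 o1)) ∧
    (∀ k, 0 < k → k < H → ∀ (x : St) (u : Ac) (ob : Ob),
      (∃ (s : ℕ → St) (o : ℕ → Ob) (a : ℕ → Ac),
          modelProbN H μ T Obs s o a ≠ 0 ∧ s (k - 1) = x ∧ a (k - 1) = u ∧ o k = ob) →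
      beliefUpdate T Obs k (pointMass x) u ob = pointMass (ψ k x u ob))

def IsHistoryDecoder (H : ℕ) (μ : St → ℝ) (T : ℕ → St → Ac → St → ℝ)
    (Obs : ℕ → St → Ob → ℝ) (φ : ℕ → (ℕ → Ob) → (ℕ → Ac) → St) : Prop :=
  (∀ k, k < H → ∀ (o o' : ℕ → Ob) (a a' : ℕ → Ac),
      (∀ j, j ≤ k → o j = o' j) → (∀ j, j < k → a j = a' j) → φ k o a = φ k o' a') ∧
    ∀ (s : ℕ → St) (o : ℕ → Ob) (a : ℕ → Ac),
      modelProbN H μ T Obs s o a ≠ 0 → ∀ k, k < H → s k = φ k o a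

theorem IsDeterministicFilter.isHistoryDecoder [Fintype St] [DecidableEq St] {ψ0 : Ob → St}
    {ψ : ℕ → St → Ac → Ob → St}
    (hψ : IsDeterministicFilter H μ T Obs ψ0 ψ) :
    IsHistoryDecoder H μ T Obs fun k o a => histDecoder ψ0 ψ o a k := by
  refine ⟨fun k _ o o' a a' ho ha => histDecoder_congr ψ0 ψ ho ha,
    fun s o a hs k hk => ?_⟩
  show s k = histDecoder ψ0 ψ o a k
  obtain ⟨hμ, hO, hT⟩ := modelProbN_ne_zero_iff.mp hs
  induction k with
  | zero =>
    have hb := hψ.1 (o 0) ⟨s, o, a, hs, rfl⟩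
    exact (bayesOp_eq_pointMass_iff.mp hb).2 (s 0) (mul_ne_zero (hO 0 hk) hμ)
  | succ k ih =>
    have hb := hψ.2 (k + 1) k.succ_pos hk (s k) (a k) (o (k + 1))
      ⟨s, o, a, hs, rfl, rfl, rfl⟩
    rw [beliefUpdate_pointMass, Nat.add_sub_cancel, bayesOp_eq_pointMass_iff] at hb
    rw [histDecoder, ← ih (by omega)]
    exact hb.2 (s (k + 1)) (mul_ne_zero (hO (k + 1) hk) (hT k hk))

-- A reachable prefix extends to a reachable trajectory with the same history.
theorem IsHistoryDecoder.eq_of_isReachable (hφ : IsHistoryDecoder H μ T Obs φ)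
    (hT : ∀ h x u, ∃ y, T h x u y ≠ 0) (hO : ∀ h x, ∃ ob, Obs h x ob ≠ 0)
    {n : ℕ} (hn : n < H)
    (h : IsReachable (n + 1) μ T Obs s o a) : s n = φ n o a := by
  obtain ⟨s', o', hagree, h'⟩ := h.exists_extend hT hO hn
  rw [← (hagree n le_rfl).1, hφ.2 s' o' a (modelProbN_ne_zero_iff.mpr h') n hn]
  exact hφ.1 n hn o' o a a (fun j hj => (hagree j hj).2) fun _ _ => rfl

theorem IsHistoryDecoder.bayesOp_eq_pointMass [Fintype St] [DecidableEq St]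
    (hφ : IsHistoryDecoder H μ T Obs φ)
    (hT : ∀ h x u, ∃ y, T h x u y ≠ 0) (hO : ∀ h x, ∃ ob, Obs h x ob ≠ 0)
    (hH : 0 < H) (h : IsReachable H μ T Obs s o a) :
    bayesOp Obs 0 μ (o 0) = pointMass (s 0) := by
  refine bayesOp_eq_pointMass_iff.mpr ⟨mul_ne_zero (h.2.1 0 hH) h.1, fun y hy => ?_⟩
  have hy' := hφ.eq_of_isReachable hT hO hH
    (isReachable_one (s := Function.update s 0 y) (a := a) (by simpa using hy))
  simpa using hy'.trans (hφ.eq_of_isReachable hT hO hH (h.mono hH)).symm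

theorem IsHistoryDecoder.beliefUpdate_eq_pointMass [Fintype St] [DecidableEq St]
    (hφ : IsHistoryDecoder H μ T Obs φ)
    (hT : ∀ h x u, ∃ y, T h x u y ≠ 0) (hO : ∀ h x, ∃ ob, Obs h x ob ≠ 0)
    {n : ℕ} (hn : n + 1 < H)
    (h : IsReachable H μ T Obs s o a) :
    beliefUpdate T Obs (n + 1) (pointMass (s n)) (a n) (o (n + 1)) = pointMass (s (n + 1)) := by
  have hr : IsReachable (n + 2) μ T Obs s o a := h.mono hn
  rw [beliefUpdate_pointMass, Nat.add_sub_cancel, bayesOp_eq_pointMass_iff]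
  refine ⟨mul_ne_zero (hr.2.1 (n + 1) (by omega)) (hr.2.2 n (by omega)), fun y hy => ?_⟩
  have hy' := hφ.eq_of_isReachable hT hO hn (hr.update_succ hy)
  simpa using hy'.trans (hφ.eq_of_isReachable hT hO hn hr).symm

theorem IsHistoryDecoder.exists_isDeterministicFilter [Fintype St] [DecidableEq St]
    [Nonempty St] (hφ : IsHistoryDecoder H μ T Obs φ)
    (hT : ∀ h x u, ∃ y, T h x u y ≠ 0) (hO : ∀ h x, ∃ ob, Obs h x ob ≠ 0)
    (hH : 0 < H) :
    ∃ ψ0 ψ, IsDeterministicFilter H μ T Obs ψ0 ψ := by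
  have hψ0 : ∀ o1 : Ob, (∃ (s : ℕ → St) (o : ℕ → Ob) (a : ℕ → Ac),
      modelProbN H μ T Obs s o a ≠ 0 ∧ o 0 = o1) → ∃ y, bayesOp Obs 0 μ o1 = pointMass y := by
    rintro _ ⟨s, o, a, hs, rfl⟩
    exact ⟨s 0, hφ.bayesOp_eq_pointMass hT hO hH (modelProbN_ne_zero_iff.mp hs)⟩
  have hψ : ∀ k, 0 < k → k < H → ∀ (x : St) (u : Ac) (ob : Ob),
      (∃ (s : ℕ → St) (o : ℕ → Ob) (a : ℕ → Ac),
        modelProbN H μ T Obs s o a ≠ 0 ∧ s (k - 1) = x ∧ a (k - 1) = u ∧ o k = ob) →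
      ∃ y, beliefUpdate T Obs k (pointMass x) u ob = pointMass y := by
    rintro k hk0 hkH _ _ _ ⟨s, o, a, hs, rfl, rfl, rfl⟩
    obtain ⟨n, rfl⟩ : ∃ n, k = n + 1 := ⟨k - 1, by omega⟩
    exact ⟨s (n + 1), hφ.beliefUpdate_eq_pointMass hT hO hkH (modelProbN_ne_zero_iff.mp hs)⟩
  choose! ψ0 hψ0 using hψ0
  choose! ψ hψ using hψ
  exact ⟨ψ0, ψ, hψ0, hψ⟩

end Decodability

theorem stmt_11_general [Fintype St] [DecidableEq St] [Fintype Ob]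
    (H : ℕ) (hH : 0 < H)
    (μ : St → ℝ) (T : ℕ → St → Ac → St → ℝ) (Obs : ℕ → St → Ob → ℝ)
    (hμs : ∑ x, μ x = 1)
    (hTs : ∀ h x u, ∑ y, T h x u y = 1)
    (hOs : ∀ h x, ∑ o, Obs h x o = 1) :
    ((∃ ψ0 : Ob → St, ∃ ψ : ℕ → St → Ac → Ob → St,
        (∀ o1 : Ob,
          (∃ (s : ℕ → St) (o : ℕ → Ob) (a : ℕ → Ac),
              modelProbN H μ T Obs s o a ≠ 0 ∧ o 0 = o1) →
          bayesOp Obs 0 μ o1 = pointMass (ψ0 o1)) ∧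
        (∀ k, 0 < k → k < H → ∀ (x : St) (u : Ac) (ob : Ob),
          (∃ (s : ℕ → St) (o : ℕ → Ob) (a : ℕ → Ac),
              modelProbN H μ T Obs s o a ≠ 0 ∧ s (k - 1) = x ∧ a (k - 1) = u ∧ o k = ob) →
          beliefUpdate T Obs k (pointMass x) u ob = pointMass (ψ k x u ob))) ↔
      (∃ φ : ℕ → (ℕ → Ob) → (ℕ → Ac) → St,
        (∀ k, k < H → ∀ (o o' : ℕ → Ob) (a a' : ℕ → Ac),
          (∀ j, j ≤ k → o j = o' j) → (∀ j, j < k → a j = a' j) → φ k o a = φ k o' a') ∧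
        ∀ (s : ℕ → St) (o : ℕ → Ob) (a : ℕ → Ac),
          modelProbN H μ T Obs s o a ≠ 0 → ∀ k, k < H → s k = φ k o a)) := by
  have hT : ∀ h x u, ∃ y, T h x u y ≠ 0 := fun h x u => by
    obtain ⟨y, -, hy⟩ :=
      Finset.exists_ne_zero_of_sum_ne_zero (by simp [hTs] : ∑ y, T h x u y ≠ 0)
    exact ⟨y, hy⟩
  have hO : ∀ h x, ∃ ob, Obs h x ob ≠ 0 := fun h x => by
    obtain ⟨ob, -, hob⟩ :=
      Finset.exists_ne_zero_of_sum_ne_zero (by simp [hOs] : ∑ ob, Obs h x ob ≠ 0)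
    exact ⟨ob, hob⟩
  have : Nonempty St := by
    obtain ⟨x, -⟩ := Finset.exists_ne_zero_of_sum_ne_zero (by simp [hμs] : ∑ x, μ x ≠ 0)
    exact ⟨x⟩
  change (∃ ψ0 ψ, IsDeterministicFilter H μ T Obs ψ0 ψ) ↔ ∃ φ, IsHistoryDecoder H μ T Obs φ
  exact ⟨fun ⟨_, _, hψ⟩ => ⟨_, hψ.isHistoryDecoder⟩,
    fun ⟨_, hφ⟩ => hφ.exists_isDeterministicFilter hT hO hH⟩

/-- Equivalence of the deterministic filter condition (belief
updates of point-mass beliefs stay point masses, via some unknown decoders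
`ψ₀, ψ` on reachable data) with history decodability (some causal functions `φ_h`
of the observation-action history determine the state with probability one along
every reachable trajectory). -/
theorem stmt_11 [Fintype St] [DecidableEq St] [Fintype Ob] [Fintype Ac]
    (H : ℕ) (hH : 0 < H)
    (μ : St → ℝ) (T : ℕ → St → Ac → St → ℝ) (Obs : ℕ → St → Ob → ℝ)
    (hμ0 : ∀ x, 0 ≤ μ x) (hμs : ∑ x, μ x = 1)
    (hT0 : ∀ h x u y, 0 ≤ T h x u y) (hTs : ∀ h x u, ∑ y, T h x u y = 1)
    (hO0 : ∀ h x o, 0 ≤ Obs h x o) (hOs : ∀ h x, ∑ o, Obs h x o = 1) :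
    ((∃ ψ0 : Ob → St, ∃ ψ : ℕ → St → Ac → Ob → St,
        (∀ o1 : Ob,
          (∃ (s : ℕ → St) (o : ℕ → Ob) (a : ℕ → Ac),
              modelProbN H μ T Obs s o a ≠ 0 ∧ o 0 = o1) →
          bayesOp Obs 0 μ o1 = pointMass (ψ0 o1)) ∧
        (∀ k, 0 < k → k < H → ∀ (x : St) (u : Ac) (ob : Ob),
          (∃ (s : ℕ → St) (o : ℕ → Ob) (a : ℕ → Ac),
              modelProbN H μ T Obs s o a ≠ 0 ∧ s (k - 1) = x ∧ a (k - 1) = u ∧ o k = ob) →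
          beliefUpdate T Obs k (pointMass x) u ob = pointMass (ψ k x u ob))) ↔
      (∃ φ : ℕ → (ℕ → Ob) → (ℕ → Ac) → St,
        (∀ k, k < H → ∀ (o o' : ℕ → Ob) (a a' : ℕ → Ac),
          (∀ j, j ≤ k → o j = o' j) → (∀ j, j < k → a j = a' j) → φ k o a = φ k o' a') ∧
        ∀ (s : ℕ → St) (o : ℕ → Ob) (a : ℕ → Ac),
          modelProbN H μ T Obs s o a ≠ 0 → ∀ k, k < H → s k = φ k o a)) :=
  stmt_11_general H hH μ T Obs hμs hTs hOs

end Filter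
end

section
/- Fix a state-based joint policy $\pi \in \Pi_{\mathcal{S}}$ in a finite-horizon stochastic game with $n$ agents, state-action rewards, and Markov transitions. For any agent $i$, the maximum value of $v_i((m_i \diamond \pi_i) \odot \pi_{-i})$ over general strategy modifications $m_i$ (which may condition on the entire joint history including states) equals the maximum over Markov strategy modifications $m_i : \mathcal{S} \times \mathcal{A}_i \to \mathcal{A}_i$ conditioning only on the current state and recommended action: $\max_{m_i \in \mathcal{M}_i^{\mathrm{gen}}} v_i((m_i \diamond \pi_i) \odot \pi_{-i}) = \max_{m_i \in \mathcal{M}_{\mathcal{S},i}} v_i((m_i \diamond \pi_i) \odot \pi_{-i})$. -/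
/-!
Backward induction on the horizon. Conditioning on the first state, observation and joint
action turns the horizon-`H + 1` game into horizon-`H` games with shifted data; because the
recommendation policy, transitions and rewards are Markov, the best value agent `i` can still
obtain from a state does not depend on the history that led there. So the optimal values of
the modifier's MDP on extended states (state, recommended action) bound the value of every
causal modification, and a Markov modification that is greedy for them at every step attains
the bound.
-/

open Finset

section StrategyMod

open Classical

variable {St Ob : Type*} {n : ℕ} {AcI : Fin n → Type*}

/-- A general strategy modification for agent `i`: given the step and the full
history (states, observations, realized actions) and the recommended action for
agent `i`, output a modified action. -/
abbrev GenMod (St Ob : Type*) {n : ℕ} (AcI : Fin n → Type*) (i : Fin n) :=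
  ℕ → (ℕ → St) → (ℕ → Ob) → (ℕ → ∀ j, AcI j) → AcI i → AcI i

/-- Causality of a strategy modification: at step `h` it may only depend on the
states and observations up to step `h` and realized actions before step `h`. -/
def CausalMod (H : ℕ) {i : Fin n} (m : GenMod St Ob AcI i) : Prop :=
  ∀ h, h < H → ∀ (s s' : ℕ → St) (o o' : ℕ → Ob) (a a' : ℕ → ∀ j, AcI j),
    (∀ k, k ≤ h → s k = s' k) → (∀ k, k ≤ h → o k = o' k) → (∀ k, k < h → a k = a' k) →
    m h s o a = m h s' o' a'

/-- The joint policy induced by the correlated Markov state-based recommendation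
policy `π` when agent `i` applies the strategy modification `m`: the realized
joint action replaces agent `i`'s recommended action by its modification. -/
noncomputable def modPol [DecidableEq (Fin n)] [∀ j, Fintype (AcI j)]
    [∀ j, DecidableEq (AcI j)]
    (π : ℕ → St → (∀ j, AcI j) → ℝ) (i : Fin n) (m : GenMod St Ob AcI i) :
    GPolicy St Ob (∀ j, AcI j) :=
  fun h s o a b =>
    ∑ c : ∀ j, AcI j,
      if Function.update c i (m h s o a (c i)) = b then π h (s h) c else 0


section Trajectories

variable {Ac : Type*}

@[simp]
def consN {α : Type*} (x : α) (f : ℕ → α) : ℕ → α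
  | 0 => x
  | k + 1 => f k

def tailN {α : Type*} (f : ℕ → α) : ℕ → α := fun k => f (k + 1)

@[simp]
lemma tailN_apply {α : Type*} (f : ℕ → α) (k : ℕ) : tailN f k = f (k + 1) := rfl

lemma extN_cons {α : Type*} [Inhabited α] {H : ℕ} (x : α) (f : Fin H → α) :
    extN (Fin.cons x f : Fin (H + 1) → α) = consN x (extN f) := by
  funext k
  rcases k with _ | k
  · rfl
  · by_cases hk : k < H
    · simp only [extN, consN, dif_pos hk, dif_pos (Nat.succ_lt_succ hk)]
      exact Fin.cons_succ (α := fun _ => α) x f ⟨k, hk⟩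
    · simp [extN, hk]

lemma consN_eq_consN_of_le {α : Type*} {s s' : ℕ → α} {h : ℕ} (hs : ∀ k, k ≤ h → s k = s' k)
    (x : α) : ∀ k, k ≤ h + 1 → consN x s k = consN x s' k
  | 0, _ => rfl
  | k + 1, hk => hs k (by omega)

lemma consN_eq_consN_of_lt {α : Type*} {s s' : ℕ → α} {h : ℕ} (hs : ∀ k, k < h → s k = s' k)
    (x : α) : ∀ k, k < h + 1 → consN x s k = consN x s' k
  | 0, _ => rfl
  | k + 1, hk => hs k (by omega)

def condPol (πg : GPolicy St Ob Ac) (x : St) (o0 : Ob) (a0 : Ac) : GPolicy St Ob Ac :=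
  fun k s o a => πg (k + 1) (consN x s) (consN o0 o) (consN a0 a)

lemma CausalPolicy.cond {H : ℕ} {πg : GPolicy St Ob Ac} (hc : CausalPolicy (H + 1) πg)
    (x : St) (o0 : Ob) (a0 : Ac) : CausalPolicy H (condPol πg x o0 a0) :=
  fun k hk _ _ _ _ _ _ hs ho ha => hc (k + 1) (by omega) _ _ _ _ _ _
    (consN_eq_consN_of_le hs x) (consN_eq_consN_of_le ho o0) (consN_eq_consN_of_lt ha a0)

def firstPol [Inhabited Ac] (πg : GPolicy St Ob Ac) (x : St) (o0 : Ob) : Ac → ℝ :=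
  πg 0 (fun _ => x) (fun _ => o0) (fun _ => default)

lemma sum_firstPol [Inhabited Ac] [Fintype Ac] {πg : GPolicy St Ob Ac}
    (hπs : ∀ h s o a, ∑ b, πg h s o a b = 1) (x : St) (o0 : Ob) :
    ∑ a0, firstPol πg x o0 a0 = 1 :=
  hπs 0 _ _ _

lemma CausalPolicy.apply_zero [Inhabited Ac] {H : ℕ} {πg : GPolicy St Ob Ac}
    (hc : CausalPolicy (H + 1) πg) (x : St) (s : ℕ → St) (o0 : Ob) (o : ℕ → Ob) (a : ℕ → Ac) :
    πg 0 (consN x s) (consN o0 o) a = firstPol πg x o0 :=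
  hc 0 H.succ_pos _ _ _ _ _ _ (fun k hk => by rw [Nat.le_zero.mp hk]; rfl)
    (fun k hk => by rw [Nat.le_zero.mp hk]; rfl) (fun k hk => absurd hk k.not_lt_zero)

lemma sum_traj_succ [Fintype St] [Fintype Ob] [Fintype Ac] (H : ℕ)
    (G : Traj (H + 1) St Ob Ac → ℝ) :
    ∑ t, G t = ∑ x, ∑ o0, ∑ a0, ∑ t : Traj H St Ob Ac,
      G (Fin.cons x t.1, Fin.cons o0 t.2.1, Fin.cons a0 t.2.2) := by
  let e : (St × Ob × Ac) × Traj H St Ob Ac ≃ Traj (H + 1) St Ob Ac :=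
    { toFun := fun p => (Fin.cons p.1.1 p.2.1, Fin.cons p.1.2.1 p.2.2.1, Fin.cons p.1.2.2 p.2.2.2)
      invFun := fun t => ((t.1 0, t.2.1 0, t.2.2 0), (Fin.tail t.1, Fin.tail t.2.1, Fin.tail t.2.2))
      left_inv := fun _ => by simp
      right_inv := fun _ => by simp }
  simp only [← e.sum_comp G, Fintype.sum_prod_type]
  rfl

variable [Inhabited St] [Inhabited Ob] [Inhabited Ac]

/-- A horizon-`0` tail is the single empty trajectory, of weight `μ default`: its initial
weights must be `1` rather than `T 0 x a0`. -/
lemma trajProb_cons {H : ℕ} (μ : St → ℝ) (T : ℕ → St → Ac → St → ℝ) (Obs : ℕ → St → Ob → ℝ)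
    {πg : GPolicy St Ob Ac} (hc : CausalPolicy (H + 1) πg) (x : St) (o0 : Ob) (a0 : Ac)
    (t : Traj H St Ob Ac) :
    trajProb (H + 1) μ T Obs πg (Fin.cons x t.1, Fin.cons o0 t.2.1, Fin.cons a0 t.2.2) =
      μ x * Obs 0 x o0 * firstPol πg x o0 a0 *
        trajProb H (fun y => if 0 < H then T 0 x a0 y else 1) (tailN T) (tailN Obs)
          (condPol πg x o0 a0) t := by
  simp only [trajProb, trajProbN, extN_cons, prod_range_succ']
  simp only [consN, tailN_apply, condPol, hc.apply_zero, Nat.add_lt_add_iff_right]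
  split_ifs <;> ring

variable [Fintype St] [Fintype Ob] [Fintype Ac]

lemma sum_trajProb {H : ℕ} {T : ℕ → St → Ac → St → ℝ} {Obs : ℕ → St → Ob → ℝ}
    {πg : GPolicy St Ob Ac} (hc : CausalPolicy H πg) (hπs : ∀ h s o a, ∑ b, πg h s o a b = 1)
    (hTs : ∀ h x u, ∑ y, T h x u y = 1) (hOs : ∀ h x, ∑ o, Obs h x o = 1)
    {ν : St → ℝ} (hν : ∑ y, ν y = 1) :
    ∑ t, trajProb H (fun y => if 0 < H then ν y else 1) T Obs πg t = 1 := by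
  induction H generalizing T Obs πg ν with
  | zero => simp [trajProb, trajProbN]
  | succ H ih =>
    have htail (x : St) (o0 : Ob) (a0 : Ac) := ih (T := tailN T) (Obs := tailN Obs)
      (hc.cond x o0 a0) (fun h _ _ _ => hπs (h + 1) _ _ _) (fun h => hTs (h + 1))
      (fun h => hOs (h + 1)) (hTs 0 x a0)
    simp only [H.succ_pos, if_true, sum_traj_succ, trajProb_cons _ _ _ hc, ← mul_sum, htail,
      mul_one, sum_firstPol hπs, hOs, hν]

lemma pvalue_zero (μ : St → ℝ) (T : ℕ → St → Ac → St → ℝ) (Obs : ℕ → St → Ob → ℝ)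
    (r : ℕ → St → Ac → ℝ) (πg : GPolicy St Ob Ac) : pvalue 0 μ T Obs r πg = 0 := by
  simp [pvalue]

lemma pvalue_tail_init (H : ℕ) (ν : St → ℝ) (T : ℕ → St → Ac → St → ℝ)
    (Obs : ℕ → St → Ob → ℝ) (r : ℕ → St → Ac → ℝ) (πg : GPolicy St Ob Ac) :
    pvalue H (fun y => if 0 < H then ν y else 1) T Obs r πg = pvalue H ν T Obs r πg := by
  rcases H with _ | H
  · simp only [pvalue_zero]
  · simp only [H.succ_pos, if_true]

lemma pvalue_succ {H : ℕ} (μ : St → ℝ) {T : ℕ → St → Ac → St → ℝ} {Obs : ℕ → St → Ob → ℝ}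
    (r : ℕ → St → Ac → ℝ) {πg : GPolicy St Ob Ac} (hc : CausalPolicy (H + 1) πg)
    (hπs : ∀ h s o a, ∑ b, πg h s o a b = 1)
    (hTs : ∀ h x u, ∑ y, T h x u y = 1) (hOs : ∀ h x, ∑ o, Obs h x o = 1) :
    pvalue (H + 1) μ T Obs r πg =
      ∑ x, μ x * ∑ o0, Obs 0 x o0 * ∑ a0, firstPol πg x o0 a0 *
        (r 0 x a0 + pvalue H (T 0 x a0) (tailN T) (tailN Obs) (tailN r) (condPol πg x o0 a0)) := by
  simp only [mul_sum]
  rw [pvalue, sum_traj_succ]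
  refine sum_congr rfl fun x _ => sum_congr rfl fun o0 _ => sum_congr rfl fun a0 _ => ?_
  have hmass := sum_trajProb (T := tailN T) (Obs := tailN Obs) (hc.cond x o0 a0)
    (fun h _ _ _ => hπs (h + 1) _ _ _) (fun h => hTs (h + 1)) (fun h => hOs (h + 1)) (hTs 0 x a0)
  rw [← pvalue_tail_init, pvalue]
  simp only [trajProb_cons _ _ _ hc, extN_cons, sum_range_succ', consN, tailN_apply, mul_assoc,
    ← mul_sum, mul_add, sum_add_distrib, ← sum_mul, hmass]
  ring

end Trajectories

section Modifications

variable {i : Fin n}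

variable (i) in
def markovMod (κ : ℕ → St → AcI i → AcI i) : GenMod St Ob AcI i :=
  fun h s _ _ ai => κ h (s h) ai

variable (i) in
lemma causalMod_markovMod (H : ℕ) (κ : ℕ → St → AcI i → AcI i) :
    CausalMod H (markovMod (Ob := Ob) i κ) :=
  fun h _ _ _ _ _ _ _ hs _ _ => congrArg (κ h) (hs h le_rfl)

def condMod (m : GenMod St Ob AcI i) (x : St) (o0 : Ob) (a0 : ∀ j, AcI j) : GenMod St Ob AcI i :=
  fun k s o a => m (k + 1) (consN x s) (consN o0 o) (consN a0 a)

lemma condMod_markovMod (κ : ℕ → St → AcI i → AcI i) (x : St) (o0 : Ob) (a0 : ∀ j, AcI j) :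
    condMod (markovMod i κ) x o0 a0 = markovMod i (tailN κ) :=
  rfl

lemma CausalMod.cond {H : ℕ} {m : GenMod St Ob AcI i} (hm : CausalMod (H + 1) m)
    (x : St) (o0 : Ob) (a0 : ∀ j, AcI j) : CausalMod H (condMod m x o0 a0) :=
  fun k hk _ _ _ _ _ _ hs ho ha => hm (k + 1) (by omega) _ _ _ _ _ _
    (consN_eq_consN_of_le hs x) (consN_eq_consN_of_le ho o0) (consN_eq_consN_of_lt ha a0)

def firstRule [∀ j, Inhabited (AcI j)] (m : GenMod St Ob AcI i) (x : St) (o0 : Ob) :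
    AcI i → AcI i :=
  m 0 (fun _ => x) (fun _ => o0) (fun _ => default)

lemma firstRule_markovMod [∀ j, Inhabited (AcI j)] (κ : ℕ → St → AcI i → AcI i) (x : St)
    (o0 : Ob) :
    firstRule (markovMod i κ) x o0 = κ 0 x :=
  rfl

variable [∀ j, Fintype (AcI j)] [∀ j, DecidableEq (AcI j)]

lemma CausalMod.modPol {H : ℕ} {m : GenMod St Ob AcI i} (hm : CausalMod H m)
    (π : ℕ → St → (∀ j, AcI j) → ℝ) : CausalPolicy H (modPol π i m) :=
  fun h hh s s' o o' a a' hs ho ha => by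
    funext b
    unfold _root_.modPol
    rw [hm h hh s s' o o' a a' hs ho ha, hs h le_rfl]

lemma sum_modPol {π : ℕ → St → (∀ j, AcI j) → ℝ} (hπs : ∀ h x, ∑ c, π h x c = 1)
    (m : GenMod St Ob AcI i) (h : ℕ) (s : ℕ → St) (o : ℕ → Ob) (a : ℕ → ∀ j, AcI j) :
    ∑ b, modPol π i m h s o a b = 1 := by
  unfold modPol
  rw [sum_comm]
  simp only [sum_ite_eq, mem_univ, if_true, hπs]

variable [∀ j, Inhabited (AcI j)]

lemma sum_firstPol_modPol_mul (π : ℕ → St → (∀ j, AcI j) → ℝ) (m : GenMod St Ob AcI i)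
    (x : St) (o0 : Ob) (g : (∀ j, AcI j) → ℝ) :
    ∑ a0, firstPol (modPol π i m) x o0 a0 * g a0 =
      ∑ c, π 0 x c * g (Function.update c i (firstRule m x o0 (c i))) := by
  simp only [firstPol, modPol, sum_mul, ite_mul, zero_mul]
  rw [sum_comm]
  simp only [sum_ite_eq, mem_univ, if_true]
  rfl

variable [Fintype St] [Fintype Ob] [Inhabited St] [Inhabited Ob]

lemma pvalue_modPol_succ {H : ℕ} (μ : St → ℝ) {T : ℕ → St → (∀ j, AcI j) → St → ℝ}
    {Obs : ℕ → St → Ob → ℝ} (r : ℕ → St → (∀ j, AcI j) → ℝ) {π : ℕ → St → (∀ j, AcI j) → ℝ}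
    {m : GenMod St Ob AcI i} (hm : CausalMod (H + 1) m) (hπs : ∀ h x, ∑ c, π h x c = 1)
    (hTs : ∀ h x u, ∑ y, T h x u y = 1) (hOs : ∀ h x, ∑ o, Obs h x o = 1) :
    pvalue (H + 1) μ T Obs r (modPol π i m) =
      ∑ x, μ x * ∑ o0, Obs 0 x o0 * ∑ c, π 0 x c *
        (r 0 x (Function.update c i (firstRule m x o0 (c i))) +
          pvalue H (T 0 x (Function.update c i (firstRule m x o0 (c i)))) (tailN T) (tailN Obs)
            (tailN r) (modPol (tailN π) i
              (condMod m x o0 (Function.update c i (firstRule m x o0 (c i)))))) := by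
  rw [pvalue_succ μ r (hm.modPol π) (sum_modPol hπs m) hTs hOs]
  simp only [sum_firstPol_modPol_mul]
  rfl

end Modifications

section DynamicProgramming

variable [Fintype St] [∀ j, Fintype (AcI j)] [∀ j, DecidableEq (AcI j)] (i : Fin n)

/-- One Bellman step of the modifier's MDP on extended states `(x, c i)`: the recommendation is
drawn after `x` is known, so choosing an action at every extended state over `x` amounts to
choosing a rule `d`. -/
def qValue (T0 : St → (∀ j, AcI j) → St → ℝ) (r0 : St → (∀ j, AcI j) → ℝ)
    (π0 : St → (∀ j, AcI j) → ℝ) (V : St → ℝ) (x : St) (d : AcI i → AcI i) : ℝ :=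
  ∑ c, π0 x c * (r0 x (Function.update c i (d (c i))) +
    ∑ y, T0 x (Function.update c i (d (c i))) y * V y)

def optValue : ℕ → (ℕ → St → (∀ j, AcI j) → St → ℝ) → (ℕ → St → (∀ j, AcI j) → ℝ) →
    (ℕ → St → (∀ j, AcI j) → ℝ) → St → ℝ
  | 0, _, _, _, _ => 0
  | H + 1, T, r, π, x => univ.sup' ⟨id, mem_univ _⟩
      (qValue i (T 0) (r 0) (π 0) (optValue H (tailN T) (tailN r) (tailN π)) x)

def markovValue : ℕ → (ℕ → St → AcI i → AcI i) → (ℕ → St → (∀ j, AcI j) → St → ℝ) →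
    (ℕ → St → (∀ j, AcI j) → ℝ) → (ℕ → St → (∀ j, AcI j) → ℝ) → St → ℝ
  | 0, _, _, _, _, _ => 0
  | H + 1, κ, T, r, π, x => qValue i (T 0) (r 0) (π 0)
      (markovValue H (tailN κ) (tailN T) (tailN r) (tailN π)) x (κ 0 x)

lemma exists_markovValue_eq_optValue (H : ℕ) (T : ℕ → St → (∀ j, AcI j) → St → ℝ)
    (r : ℕ → St → (∀ j, AcI j) → ℝ) (π : ℕ → St → (∀ j, AcI j) → ℝ) :
    ∃ κ, markovValue i H κ T r π = optValue i H T r π := by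
  induction H generalizing T r π with
  | zero => exact ⟨fun _ _ => id, rfl⟩
  | succ H ih =>
    obtain ⟨κ, hκ⟩ := ih (tailN T) (tailN r) (tailN π)
    choose d hd using fun x => exists_mem_eq_sup' ⟨id, mem_univ _⟩
      (qValue i (T 0) (r 0) (π 0) (optValue i H (tailN T) (tailN r) (tailN π)) x)
    refine ⟨consN d κ, funext fun x => ?_⟩
    rw [markovValue, optValue, (hd x).2]
    exact congrArg (qValue i (T 0) (r 0) (π 0) · x (d x)) hκ

variable [Fintype Ob] [Inhabited St] [Inhabited Ob] [∀ j, Inhabited (AcI j)] {i}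

lemma pvalue_markovMod {H : ℕ} (μ : St → ℝ) {T : ℕ → St → (∀ j, AcI j) → St → ℝ}
    {Obs : ℕ → St → Ob → ℝ} (r : ℕ → St → (∀ j, AcI j) → ℝ) {π : ℕ → St → (∀ j, AcI j) → ℝ}
    (κ : ℕ → St → AcI i → AcI i) (hπs : ∀ h x, ∑ c, π h x c = 1)
    (hTs : ∀ h x u, ∑ y, T h x u y = 1) (hOs : ∀ h x, ∑ o, Obs h x o = 1) :
    pvalue H μ T Obs r (modPol π i (markovMod i κ)) = ∑ x, μ x * markovValue i H κ T r π x := by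
  induction H generalizing μ T Obs r π κ with
  | zero => simp [pvalue_zero, markovValue]
  | succ H ih =>
    rw [pvalue_modPol_succ μ r (causalMod_markovMod i _ κ) hπs hTs hOs]
    refine sum_congr rfl fun x _ => congrArg _ ?_
    simp only [condMod_markovMod, firstRule_markovMod, ih (T := tailN T) (Obs := tailN Obs)
      (π := tailN π) (hπs := fun h => hπs (h + 1)) (hTs := fun h => hTs (h + 1))
      (hOs := fun h => hOs (h + 1))]
    rw [← sum_mul, hOs, one_mul]
    rfl

lemma pvalue_modPol_le {H : ℕ} {μ : St → ℝ} {T : ℕ → St → (∀ j, AcI j) → St → ℝ}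
    {Obs : ℕ → St → Ob → ℝ} (r : ℕ → St → (∀ j, AcI j) → ℝ) {π : ℕ → St → (∀ j, AcI j) → ℝ}
    {m : GenMod St Ob AcI i} (hm : CausalMod H m) (hμ0 : ∀ x, 0 ≤ μ x)
    (hπ0 : ∀ h x c, 0 ≤ π h x c) (hπs : ∀ h x, ∑ c, π h x c = 1)
    (hT0 : ∀ h x u y, 0 ≤ T h x u y) (hTs : ∀ h x u, ∑ y, T h x u y = 1)
    (hO0 : ∀ h x o, 0 ≤ Obs h x o) (hOs : ∀ h x, ∑ o, Obs h x o = 1) :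
    pvalue H μ T Obs r (modPol π i m) ≤ ∑ x, μ x * optValue i H T r π x := by
  induction H generalizing μ T Obs r π m with
  | zero => simp [pvalue_zero, optValue]
  | succ H ih =>
    rw [pvalue_modPol_succ μ r hm hπs hTs hOs]
    gcongr with x _
    · exact hμ0 x
    calc _ ≤ ∑ o0, Obs 0 x o0 *
          qValue i (T 0) (r 0) (π 0) (optValue i H (tailN T) (tailN r) (tailN π)) x
            (firstRule m x o0) := by
          unfold qValue
          gcongr with o0 _ c _
          · exact hO0 0 x o0
          · exact hπ0 0 x c
          exact ih (tailN r) (hm.cond x o0 _) (hT0 0 x _) (fun h => hπ0 (h + 1))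
            (fun h => hπs (h + 1)) (fun h => hT0 (h + 1)) (fun h => hTs (h + 1))
            (fun h => hO0 (h + 1)) (fun h => hOs (h + 1))
      _ ≤ ∑ o0, Obs 0 x o0 * optValue i (H + 1) T r π x := by
          gcongr with o0 _
          · exact hO0 0 x o0
          exact le_sup' _ (mem_univ _)
      _ = optValue i (H + 1) T r π x := by rw [← sum_mul, hOs, one_mul]

end DynamicProgramming

theorem stmt_15_general [Fintype St] [Fintype Ob] [∀ j, Fintype (AcI j)] [∀ j, DecidableEq (AcI j)]
    [Inhabited St] [Inhabited Ob] [∀ j, Inhabited (AcI j)]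
    (H : ℕ)
    (μ : St → ℝ) (T : ℕ → St → (∀ j, AcI j) → St → ℝ) (Obs : ℕ → St → Ob → ℝ)
    (hμ0 : ∀ x, 0 ≤ μ x)
    (hT0 : ∀ h x u y, 0 ≤ T h x u y) (hTs : ∀ h x u, ∑ y, T h x u y = 1)
    (hO0 : ∀ h x o, 0 ≤ Obs h x o) (hOs : ∀ h x, ∑ o, Obs h x o = 1)
    (r : Fin n → ℕ → St → (∀ j, AcI j) → ℝ)
    (π : ℕ → St → (∀ j, AcI j) → ℝ)
    (hπ0 : ∀ h x c, 0 ≤ π h x c) (hπs : ∀ h x, ∑ c, π h x c = 1) :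
    ∀ i : Fin n,
      (⨆ m : {m : GenMod St Ob AcI i // CausalMod H m},
          pvalue H μ T Obs (r i) (modPol π i m.1)) =
        ⨆ mk : ℕ → St → AcI i → AcI i,
          pvalue H μ T Obs (r i)
            (modPol π i (fun h s _o _a ai => mk h (s h) ai)) := by
  intro i
  have hgen (m : {m : GenMod St Ob AcI i // CausalMod H m}) :
      pvalue H μ T Obs (r i) (modPol π i m.1) ≤ ∑ x, μ x * optValue i H T (r i) π x :=
    pvalue_modPol_le (r i) m.2 hμ0 hπ0 hπs hT0 hTs hO0 hOs
  have hmarkov (κ : ℕ → St → AcI i → AcI i) :=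
    hgen ⟨markovMod i κ, causalMod_markovMod i H κ⟩
  obtain ⟨κ, hκ⟩ := exists_markovValue_eq_optValue i H T (r i) π
  have hopt : pvalue H μ T Obs (r i) (modPol π i (markovMod i κ)) =
      ∑ x, μ x * optValue i H T (r i) π x := by
    rw [pvalue_markovMod μ (r i) κ hπs hTs hOs, hκ]
  have : Nonempty {m : GenMod St Ob AcI i // CausalMod H m} :=
    ⟨⟨markovMod i κ, causalMod_markovMod i H κ⟩⟩
  apply le_antisymm
  · exact ciSup_le fun m => (hgen m).trans
      (hopt ▸ le_ciSup ⟨_, Set.forall_mem_range.2 hmarkov⟩ κ)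
  · exact ciSup_le fun κ => le_ciSup ⟨_, Set.forall_mem_range.2 hgen⟩
      ⟨markovMod i κ, causalMod_markovMod i H κ⟩

/-- For a Markov correlated state-based recommendation policy in
a finite-horizon stochastic game, the best value achievable by agent `i` via
general (history-and-state-dependent, causal) strategy modifications equals the
best value achievable via Markov strategy modifications that condition only on
the current state and the recommended action. -/
theorem stmt_15 [Fintype St] [Fintype Ob] [∀ j, Fintype (AcI j)] [∀ j, DecidableEq (AcI j)]
    [Inhabited St] [Inhabited Ob] [∀ j, Inhabited (AcI j)]
    (H : ℕ) (hH : 0 < H)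
    (μ : St → ℝ) (T : ℕ → St → (∀ j, AcI j) → St → ℝ) (Obs : ℕ → St → Ob → ℝ)
    (hμ0 : ∀ x, 0 ≤ μ x) (hμs : ∑ x, μ x = 1)
    (hT0 : ∀ h x u y, 0 ≤ T h x u y) (hTs : ∀ h x u, ∑ y, T h x u y = 1)
    (hO0 : ∀ h x o, 0 ≤ Obs h x o) (hOs : ∀ h x, ∑ o, Obs h x o = 1)
    (r : Fin n → ℕ → St → (∀ j, AcI j) → ℝ)
    (hr0 : ∀ i h x u, 0 ≤ r i h x u) (hr1 : ∀ i h x u, r i h x u ≤ 1)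
    (π : ℕ → St → (∀ j, AcI j) → ℝ)
    (hπ0 : ∀ h x c, 0 ≤ π h x c) (hπs : ∀ h x, ∑ c, π h x c = 1) :
    ∀ i : Fin n,
      (⨆ m : {m : GenMod St Ob AcI i // CausalMod H m},
          pvalue H μ T Obs (r i) (modPol π i m.1)) =
        ⨆ mk : ℕ → St → AcI i → AcI i,
          pvalue H μ T Obs (r i)
            (modPol π i (fun h s _o _a ai => mk h (s h) ai)) :=
  stmt_15_general H μ T Obs hμ0 hT0 hTs hO0 hOs r π hπ0 hπs

end StrategyMod
end

section
/- Under the optimistic value iteration recursion with bonuses, the optimism property holds: suppose for all $(s,a)$ at step $h$, the estimated next-observation kernel satisfies $\|\hat{J}_h(\cdot \mid s,a) - \mathbb{P}(\cdot \mid s,a)\|_1 \leq b_h(s,a)/(H-h)$ where $b_h(s,a) \leq 2(H-h)$, and that the value estimate at step $h+1$ dominates the target value: $V_{h+1}^{\mathrm{high}}(c_{h+1}) \geq \hat{V}_{h+1}(c_{h+1})$ with $0 \leq \hat{V}_{h+1} \leq H - h$. Then the clipped optimistic update $Q_h^{\mathrm{high}}(\cdot) = \min\{r_h(s,a) + b_h(s,a)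 + \mathbb{E}_{o \sim \hat{J}_h(\cdot\mid s,a)}[V_{h+1}^{\mathrm{high}}(c_{h+1})],\ H-h+1\}$ satisfies $Q_h^{\mathrm{high}}(\cdot) \geq r_h(s,a) + \mathbb{E}_{o \sim \mathbb{P}(\cdot \mid s,a)}[\hat{V}_{h+1}(c_{h+1})]$ for all $(s,a)$ with $r_h(s,a) \in [0,1]$. -/
/-!
Moving the expectation of a value with range `[0, H - h]` from the true kernel `P` to the
estimate `Ĵ` costs at most `(H - h) ‖P - Ĵ‖₁`, which the bonus pays for; the clipping level
`H - h + 1` never bites, because rewards are at most `1` and the true backup of such a value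
is at most `1 + (H - h)`.
-/

open Finset

lemma sum_mul_le_sum_mul_add_mul_sum_abs_sub {ι : Type*} (s : Finset ι) {p q V : ι → ℝ}
    {M : ℝ} (hV0 : ∀ i ∈ s, 0 ≤ V i) (hVM : ∀ i ∈ s, V i ≤ M) :
    ∑ i ∈ s, p i * V i ≤ ∑ i ∈ s, q i * V i + M * ∑ i ∈ s, |p i - q i| := by
  rw [mul_sum, ← sum_add_distrib]
  gcongr with i hi
  calc p i * V i = q i * V i + (p i - q i) * V i := by ring
    _ ≤ q i * V i + |p i - q i| * V i := by gcongr; exacts [hV0 i hi, le_abs_self _]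
    _ ≤ q i * V i + M * |p i - q i| := by
      rw [mul_comm M]; gcongr; exact hVM i hi

lemma sum_mul_le_of_sum_eq_one {ι : Type*} (s : Finset ι) {p V : ι → ℝ} {M : ℝ}
    (hp0 : ∀ i ∈ s, 0 ≤ p i) (hp1 : ∑ i ∈ s, p i = 1) (hVM : ∀ i ∈ s, V i ≤ M) :
    ∑ i ∈ s, p i * V i ≤ M :=
  calc ∑ i ∈ s, p i * V i ≤ ∑ i ∈ s, p i * M :=
        sum_le_sum fun i hi => mul_le_mul_of_nonneg_left (hVM i hi) (hp0 i hi)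
    _ = M := by rw [← sum_mul, hp1, one_mul]

theorem stmt_18_general {S A O C : Type*} [Fintype O]
    (H h : ℕ) (hh : h < H)
    (r bfn : S → A → ℝ) (Jhat P : S → A → O → ℝ)
    (cnext : S → A → O → C) (Vhigh Vhat : C → ℝ)
    (hr1 : ∀ s a, r s a ≤ 1)
    (hJ0 : ∀ s a o, 0 ≤ Jhat s a o)
    (hP0 : ∀ s a o, 0 ≤ P s a o) (hPs : ∀ s a, ∑ o, P s a o = 1)
    (hberr : ∀ s a, ∑ o, |P s a o - Jhat s a o| ≤ bfn s a / ((H : ℝ) - h))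
    (hdom : ∀ c, Vhat c ≤ Vhigh c)
    (hV0 : ∀ c, 0 ≤ Vhat c) (hV1 : ∀ c, Vhat c ≤ (H : ℝ) - h) :
    ∀ s a, r s a + ∑ o, P s a o * Vhat (cnext s a o) ≤
      min (r s a + bfn s a + ∑ o, Jhat s a o * Vhigh (cnext s a o)) ((H : ℝ) - h + 1) := by
  intro s a
  have hHh : (0 : ℝ) < H - h := sub_pos.mpr (by exact_mod_cast hh)
  have hbonus : ((H : ℝ) - h) * ∑ o, |P s a o - Jhat s a o| ≤ bfn s a := by
    rw [mul_comm, ← le_div_iff₀ hHh]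
    exact hberr s a
  have hchange := sum_mul_le_sum_mul_add_mul_sum_abs_sub univ (p := P s a) (q := Jhat s a)
    (fun o _ => hV0 (cnext s a o)) (fun o _ => hV1 (cnext s a o))
  have hmono : ∑ o, Jhat s a o * Vhat (cnext s a o) ≤ ∑ o, Jhat s a o * Vhigh (cnext s a o) :=
    sum_le_sum fun o _ => mul_le_mul_of_nonneg_left (hdom _) (hJ0 s a o)
  have hclip : ∑ o, P s a o * Vhat (cnext s a o) ≤ H - h :=
    sum_mul_le_of_sum_eq_one univ (fun o _ => hP0 s a o) (hPs s a) (fun o _ => hV1 _)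
  exact le_min (by linarith) (by linarith [hr1 s a])

/-- One-step optimism of the clipped optimistic backup: if the
bonus dominates `(H-h)` times the `ℓ¹` model error of the estimated
next-observation kernel, and the optimistic value at the next step dominates a
target value taking values in `[0, H-h]`, then the clipped optimistic `Q`-update
dominates the true one-step backup of the target value. -/
theorem stmt_18 {S A O C : Type*} [Fintype O]
    (H h : ℕ) (hh : h < H)
    (r bfn : S → A → ℝ) (Jhat P : S → A → O → ℝ)
    (cnext : S → A → O → C) (Vhigh Vhat : C → ℝ)
    (hr0 : ∀ s a, 0 ≤ r s a) (hr1 : ∀ s a, r s a ≤ 1)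
    (hJ0 : ∀ s a o, 0 ≤ Jhat s a o)
    (hP0 : ∀ s a o, 0 ≤ P s a o) (hPs : ∀ s a, ∑ o, P s a o = 1)
    (hb2 : ∀ s a, bfn s a ≤ 2 * ((H : ℝ) - h))
    (hberr : ∀ s a, ∑ o, |P s a o - Jhat s a o| ≤ bfn s a / ((H : ℝ) - h))
    (hdom : ∀ c, Vhat c ≤ Vhigh c)
    (hV0 : ∀ c, 0 ≤ Vhat c) (hV1 : ∀ c, Vhat c ≤ (H : ℝ) - h) :
    ∀ s a, r s a + ∑ o, P s a o * Vhat (cnext s a o) ≤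
      min (r s a + bfn s a + ∑ o, Jhat s a o * Vhigh (cnext s a o)) ((H : ℝ) - h + 1) :=
  stmt_18_general H h hh r bfn Jhat P cnext Vhigh Vhat hr1 hJ0 hP0 hPs hberr hdom hV0 hV1
end
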